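/- arXiv:1812.11743 — 3 statements merged into one kernel-verified Lean document; each statement's English description precedes it below -/
import Mathlib

section
/- Let G be a locally compact unimodular group, K ≤ G a compact open subgroup, and s ∈ G. Then there exists a bijection φ : K → sK and a finite partition of K into clopen sets Q₁, …, Qₙ with elements h₁, …, hₙ ∈ G such that φ(x) = x·hᵢ for all x ∈ Qᵢ. (I.e., sK is obtained from K by a clopen piecewise right translation.) -/
/-!
Put `H = K ∩ s⁻¹Ks`, so that `sHs⁻¹ = sKs⁻¹ ∩ K`. Both are open subgroups of the compact group
`K`, hence `K` is a finite disjoint union of right cosets of each. A right-invariant Haar measure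
gives `μ K = [K : H] μ H = [K : sHs⁻¹] μ (sHs⁻¹)`, and by unimodularity `μ (sHs⁻¹) = μ H`, so the
two indices agree. Left multiplication by `s` turns `K = ⊔ H rᵢ` into `sK = ⊔ (sHs⁻¹) s rᵢ`,
while `K = ⊔ (sHs⁻¹) uᵢ`; right translation by `uᵢ⁻¹ s rᵢ` maps the `i`-th coset of the second
decomposition onto the `i`-th coset of the first.
-/

open MeasureTheory Function MulOpposite Pointwise

namespace Subgroup

variable {G ι κ : Type*} [Group G]

structure IsRightCosetPartition (H : Subgroup G) (X : Set G) (r : ι → G) : Prop where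
  rightCoset_subset : ∀ i, op (r i) • (H : Set G) ⊆ X
  existsUnique_mem : ∀ x ∈ X, ∃! i, x ∈ op (r i) • (H : Set G)

theorem rightCoset_conj_smul (H : Subgroup G) (s a : G) :
    op (s * a) • ((MulAut.conj s • H : Subgroup G) : Set G) = s • (op a • (H : Set G)) := by
  ext x
  rw [mem_rightCoset_iff, Set.mem_smul_set_iff_inv_smul_mem, mem_rightCoset_iff, SetLike.mem_coe,
    SetLike.mem_coe, mem_pointwise_smul_iff_inv_smul_mem, MulAut.smul_def, MulAut.conj_inv_apply,
    smul_eq_mul]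
  group

theorem coe_conj_smul (s : G) (H : Subgroup G) :
    ((MulAut.conj s • H : Subgroup G) : Set G) = (fun x => s⁻¹ * x * s) ⁻¹' H := by
  ext x
  rw [SetLike.mem_coe, mem_pointwise_smul_iff_inv_smul_mem]
  simp

namespace IsRightCosetPartition

variable {H : Subgroup G} {X : Set G} {r : ι → G}

theorem eq_of_mem (hr : IsRightCosetPartition H X r) {x : G} {i j : ι}
    (hi : x ∈ op (r i) • (H : Set G)) (hj : x ∈ op (r j) • (H : Set G)) : i = j :=
  (hr.existsUnique_mem x (hr.rightCoset_subset i hi)).unique hi hj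

theorem comp_equiv (hr : IsRightCosetPartition H X r) (e : κ ≃ ι) :
    IsRightCosetPartition H X (r ∘ e) where
  rightCoset_subset k := hr.rightCoset_subset (e k)
  existsUnique_mem x hx :=
    (e.symm.existsUnique_congr fun i => by simp).1 (hr.existsUnique_mem x hx)

theorem smul (hr : IsRightCosetPartition H X r) (s : G) :
    IsRightCosetPartition (MulAut.conj s • H) (s • X) (fun i => s * r i) where
  rightCoset_subset i := by
    rw [rightCoset_conj_smul]
    exact Set.smul_set_mono (hr.rightCoset_subset i)
  existsUnique_mem x hx := by
    simp_rw [rightCoset_conj_smul, Set.mem_smul_set_iff_inv_smul_mem (a := s)] at hx ⊢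
    exact hr.existsUnique_mem _ hx

end IsRightCosetPartition

open Classical in
noncomputable def cosetwiseTranslation (H : Subgroup G) (a b : ι → G) (x : G) : G :=
  if h : ∃ i, x ∈ op (a i) • (H : Set G) then x * ((a h.choose)⁻¹ * b h.choose) else x

namespace IsRightCosetPartition

variable {H : Subgroup G} {X Y : Set G} {a b : ι → G}

theorem cosetwiseTranslation_eq (ha : IsRightCosetPartition H X a) {i : ι} {x : G}
    (hx : x ∈ op (a i) • (H : Set G)) : cosetwiseTranslation H a b x = x * ((a i)⁻¹ * b i) := by
  have h : ∃ i, x ∈ op (a i) • (H : Set G) := ⟨i, hx⟩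
  rw [cosetwiseTranslation, dif_pos h, ha.eq_of_mem h.choose_spec hx]

theorem mapsTo_cosetwiseTranslation (ha : IsRightCosetPartition H X a)
    (hb : IsRightCosetPartition H Y b) : Set.MapsTo (cosetwiseTranslation H a b) X Y := by
  intro x hx
  obtain ⟨i, hi, -⟩ := ha.existsUnique_mem x hx
  rw [ha.cosetwiseTranslation_eq hi]
  refine hb.rightCoset_subset i ?_
  rw [mem_rightCoset_iff] at hi ⊢
  simpa [mul_assoc] using hi

theorem leftInvOn_cosetwiseTranslation (ha : IsRightCosetPartition H X a)
    (hb : IsRightCosetPartition H Y b) :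
    Set.LeftInvOn (cosetwiseTranslation H b a) (cosetwiseTranslation H a b) X := by
  intro x hx
  obtain ⟨i, hi, -⟩ := ha.existsUnique_mem x hx
  have hi' : x * ((a i)⁻¹ * b i) ∈ op (b i) • (H : Set G) := by
    rw [mem_rightCoset_iff] at hi ⊢
    simpa [mul_assoc] using hi
  rw [ha.cosetwiseTranslation_eq hi, hb.cosetwiseTranslation_eq hi']
  group

theorem bijOn_cosetwiseTranslation (ha : IsRightCosetPartition H X a)
    (hb : IsRightCosetPartition H Y b) : Set.BijOn (cosetwiseTranslation H a b) X Y :=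
  Set.InvOn.bijOn ⟨ha.leftInvOn_cosetwiseTranslation hb, hb.leftInvOn_cosetwiseTranslation ha⟩
    (ha.mapsTo_cosetwiseTranslation hb) (hb.mapsTo_cosetwiseTranslation ha)

end IsRightCosetPartition

section Topology

variable [TopologicalSpace G] [IsTopologicalGroup G]

theorem isOpen_conj_smul {H : Subgroup G} (hH : IsOpen (H : Set G)) (s : G) :
    IsOpen ((MulAut.conj s • H : Subgroup G) : Set G) := by
  rw [coe_conj_smul]
  exact hH.preimage (by fun_prop)

theorem exists_isRightCosetPartition_of_isOpen {H K : Subgroup G} (hHK : H ≤ K)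
    (hH : IsOpen (H : Set G)) (hK : IsCompact (K : Set G)) :
    ∃ n, ∃ r : Fin n → G, IsRightCosetPartition H K r := by
  have : CompactSpace K := isCompact_iff_compactSpace.mp hK
  have : Finite (K ⧸ H.subgroupOf K) :=
    quotient_finite_of_isOpen _ (hH.preimage continuous_subtype_val)
  have : (H.subgroupOf K).FiniteIndex := finiteIndex_of_finite_quotient
  obtain ⟨T, hT, -⟩ := (H.subgroupOf K).exists_isComplement_right 1
  have : Finite T := hT.finite_right
  have hTK : IsRightCosetPartition H K fun t : T => ((t : K) : G) := by
    refine ⟨fun t => ?_, fun x hx => ?_⟩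
    · rintro _ ⟨h, hh, rfl⟩
      exact K.mul_mem (hHK hh) (t : K).2
    · simpa [mem_rightCoset_iff, mem_subgroupOf] using
        isComplement_iff_existsUnique_mul_inv_mem.1 hT ⟨x, hx⟩
  exact ⟨_, _, hTK.comp_equiv (Finite.equivFin T).symm⟩

end Topology

section Measure

variable [MeasurableSpace G] [MeasurableMul G] (μ : Measure G) [μ.IsMulRightInvariant]

theorem IsRightCosetPartition.measure_eq [Fintype ι] {H : Subgroup G} {X : Set G} {r : ι → G}
    (hr : IsRightCosetPartition H X r) (hH : MeasurableSet (H : Set G)) :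
    μ X = Fintype.card ι * μ H := by
  have hX : X = ⋃ i, op (r i) • (H : Set G) := by
    refine subset_antisymm (fun x hx => ?_) (Set.iUnion_subset hr.rightCoset_subset)
    obtain ⟨i, hi, -⟩ := hr.existsUnique_mem x hx
    exact Set.mem_iUnion_of_mem i hi
  have hdisj : Pairwise (Disjoint on fun i => op (r i) • (H : Set G)) :=
    fun i j hij => Set.disjoint_left.2 fun x hi hj => hij (hr.eq_of_mem hi hj)
  rw [hX, measure_iUnion hdisj fun i => hH.const_smul _]
  simp

theorem measure_conj_smul [μ.IsMulLeftInvariant] (s : G) (H : Subgroup G) :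
    μ (MulAut.conj s • H : Subgroup G) = μ H := by
  rw [coe_conj_smul, show (fun x => s⁻¹ * x * s) = (· * s) ∘ (s⁻¹ * ·) by ext; simp [mul_assoc],
    Set.preimage_comp, measure_preimage_mul, measure_preimage_mul_right]

theorem IsRightCosetPartition.card_eq_card_of_conj [Fintype ι] [Fintype κ]
    [μ.IsMulLeftInvariant] {H : Subgroup G} {X : Set G} {r : ι → G} {u : κ → G} {s : G}
    (hr : IsRightCosetPartition H X r) (hu : IsRightCosetPartition (MulAut.conj s • H) X u)
    (hH : MeasurableSet (H : Set G)) (h0 : μ H ≠ 0) (htop : μ H ≠ ⊤) :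
    Fintype.card ι = Fintype.card κ := by
  have hconj_meas : MeasurableSet ((MulAut.conj s • H : Subgroup G) : Set G) := by
    rw [coe_conj_smul]
    exact hH.preimage (by fun_prop)
  have h := (hr.measure_eq μ hH).symm.trans (hu.measure_eq μ hconj_meas)
  rw [measure_conj_smul] at h
  exact_mod_cast (ENNReal.mul_left_inj h0 htop).1 h

end Measure

end Subgroup

open Subgroup

theorem coset_clopen_piecewise_translation_general {G : Type*} [Group G] [TopologicalSpace G]
    [IsTopologicalGroup G]
    [MeasurableSpace G] [BorelSpace G]
    (μ : Measure G) [μ.IsHaarMeasure] [μ.IsMulRightInvariant]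
    (K : Subgroup G) (hKc : IsCompact (K : Set G)) (hKo : IsOpen (K : Set G))
    (s : G) :
    ∃ (φ : G → G) (n : ℕ) (Q : Fin n → Set G) (h : Fin n → G),
      (∀ i, IsClopen (Q i)) ∧ (∀ i, Q i ⊆ (K : Set G)) ∧
      (∀ x ∈ (K : Set G), ∃! i, x ∈ Q i) ∧
      (∀ i, ∀ x ∈ Q i, φ x = x * h i) ∧
      Set.BijOn φ (K : Set G) ((fun x => s * x) '' (K : Set G)) := by
  set H := K ⊓ MulAut.conj s⁻¹ • K
  set sHs := MulAut.conj s • H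
  have hHK : H ≤ K := inf_le_left
  have hsHsK : sHs ≤ K := by
    rw [pointwise_smul_subset_iff, ← map_inv]
    exact inf_le_right
  have hHo : IsOpen (H : Set G) := hKo.inter (isOpen_conj_smul hKo s⁻¹)
  have hsHso : IsOpen (sHs : Set G) := isOpen_conj_smul hHo s
  obtain ⟨n, r, hr⟩ := exists_isRightCosetPartition_of_isOpen hHK hHo hKc
  obtain ⟨m, u, hu⟩ := exists_isRightCosetPartition_of_isOpen hsHsK hsHso hKc
  obtain rfl : n = m := by
    have hμH : μ H ≤ μ K := measure_mono hHK
    simpa using hr.card_eq_card_of_conj μ hu hHo.measurableSet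
      (hHo.measure_ne_zero μ ⟨1, H.one_mem⟩) (ne_top_of_le_ne_top hKc.measure_ne_top hμH)
  have hsK := hr.smul s
  rw [← Set.image_smul] at hsK
  exact ⟨cosetwiseTranslation sHs u fun i => s * r i, n, fun i => op (u i) • (sHs : Set G),
    fun i => (u i)⁻¹ * (s * r i),
    fun i => ⟨(isClosed_of_isOpen _ hsHso).rightCoset _, hsHso.rightCoset _⟩,
    hu.rightCoset_subset, hu.existsUnique_mem, fun i x hx => hu.cosetwiseTranslation_eq hx,
    hu.bijOn_cosetwiseTranslation hsK⟩

/-- In a unimodular locally compact group with compact open subgroup `K`, the coset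
`sK` is the image of `K` under a clopen piecewise right translation. -/
theorem coset_clopen_piecewise_translation {G : Type*} [Group G] [TopologicalSpace G]
    [IsTopologicalGroup G] [LocallyCompactSpace G] [T2Space G]
    [MeasurableSpace G] [BorelSpace G]
    (μ : Measure G) [μ.IsHaarMeasure] [μ.IsMulRightInvariant]
    (K : Subgroup G) (hKc : IsCompact (K : Set G)) (hKo : IsOpen (K : Set G))
    (s : G) :
    ∃ (φ : G → G) (n : ℕ) (Q : Fin n → Set G) (h : Fin n → G),
      (∀ i, IsClopen (Q i)) ∧ (∀ i, Q i ⊆ (K : Set G)) ∧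
      (∀ x ∈ (K : Set G), ∃! i, x ∈ Q i) ∧
      (∀ i, ∀ x ∈ Q i, φ x = x * h i) ∧
      Set.BijOn φ (K : Set G) ((fun x => s * x) '' (K : Set G)) :=
  coset_clopen_piecewise_translation_general μ K hKc hKo s
end

section
/- Let G be a locally compact group and H ≤ G an open subgroup. If there exists a clopen piecewise-translation φ of H generating a free ℤ-action on H with a measurable fundamental domain, then there exists a clopen piecewise-translation ψ of G generating a free ℤ-action on G with a measurable fundamental domain. Explicitly, choosing a section r : G/H → G of the projection, ψ(g) = r(gH)·φ(r(gH)⁻¹g) works. -/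
/-! The section `r` identifies `G` with `(G ⧸ H) × H` via `(q, h) ↦ r q * h`, and `ψ` is `φ`
acting on the second factor. Being the conjugate of `id × φ`, `ψ ^ n` is the conjugate of
`id × φ ^ n`, so freeness and fundamental domains transfer. As `H` is open, `G ⧸ H` is discrete
and the coordinate `x ↦ (r (x H))⁻¹ * x` is continuous, so clopen pieces and measurable sets pull
back along it; `ψ (r q * h) = r q * φ h` keeps every right translation. -/

def IsClopenPiecewiseTranslation {G : Type*} [Group G] [TopologicalSpace G]
    (α : G → G) : Prop :=
  ∃ (n : ℕ) (P : Fin n → Set G) (g : Fin n → G),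
    (∀ i, IsClopen (P i)) ∧ (∀ x : G, ∃! i, x ∈ P i) ∧
    ∀ i, ∀ x ∈ P i, α x = x * g i

namespace QuotientGroup

variable {G : Type*} [Group G] {H : Subgroup G} {r : G ⧸ H → G}

theorem inv_section_mul_mem (hr : ∀ q, (r q : G ⧸ H) = q) (x : G) : (r x)⁻¹ * x ∈ H :=
  QuotientGroup.eq.mp (hr x)

def prodEquivOfSection (hr : ∀ q, (r q : G ⧸ H) = q) : (G ⧸ H) × H ≃ G where
  toFun p := r p.1 * p.2
  invFun x := (x, ⟨(r x)⁻¹ * x, inv_section_mul_mem hr x⟩)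
  left_inv := by
    rintro ⟨q, h⟩
    have hq : ((r q * h : G) : G ⧸ H) = q := by rw [mk_mul_of_mem _ h.2, hr]
    ext <;> simp [hq]
  right_inv x := by simp

/-- `σ` acting on each coset `r q * H` by `r q * h ↦ r q * σ h`. -/
def extendPerm (hr : ∀ q, (r q : G ⧸ H) = q) : Equiv.Perm H →* Equiv.Perm G where
  toFun σ := (prodEquivOfSection hr).permCongr ((Equiv.refl _).prodCongr σ)
  map_one' := by ext; simp
  map_mul' σ τ := by rw [← Equiv.permCongr_mul]; rfl

variable (hr : ∀ q, (r q : G ⧸ H) = q)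

theorem coe_prodEquivOfSection_symm_snd (x : G) :
    (((prodEquivOfSection hr).symm x).2 : G) = (r x)⁻¹ * x := rfl

theorem extendPerm_apply (σ : Equiv.Perm H) (x : G) :
    extendPerm hr σ x = r x * σ ((prodEquivOfSection hr).symm x).2 := rfl

theorem prodEquivOfSection_symm_extendPerm (σ : Equiv.Perm H) (x : G) :
    (prodEquivOfSection hr).symm (extendPerm hr σ x) =
      (((prodEquivOfSection hr).symm x).1, σ ((prodEquivOfSection hr).symm x).2) :=
  (prodEquivOfSection hr).symm_apply_apply _

theorem extendPerm_apply_eq_self_iff (σ : Equiv.Perm H) (x : G) :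
    extendPerm hr σ x = x ↔
      σ ((prodEquivOfSection hr).symm x).2 = ((prodEquivOfSection hr).symm x).2 := by
  rw [← (prodEquivOfSection hr).symm.injective.eq_iff, prodEquivOfSection_symm_extendPerm]
  simp only [Prod.ext_iff, true_and]

theorem extendPerm_image_preimage (σ : Equiv.Perm H) (S : Set H) :
    extendPerm hr σ '' (Prod.snd ∘ (prodEquivOfSection hr).symm ⁻¹' S) =
      Prod.snd ∘ (prodEquivOfSection hr).symm ⁻¹' (σ '' S) := by
  ext x
  rw [Equiv.image_eq_preimage_symm, Equiv.image_eq_preimage_symm, ← Equiv.Perm.inv_def, ← map_inv]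
  simp only [Set.mem_preimage, Function.comp_apply, prodEquivOfSection_symm_extendPerm]
  rfl

variable [TopologicalSpace G] [IsTopologicalGroup G]

theorem continuous_snd_prodEquivOfSection_symm (hHo : IsOpen (H : Set G)) :
    Continuous (Prod.snd ∘ (prodEquivOfSection hr).symm) := by
  have : DiscreteTopology (G ⧸ H) := discreteTopology hHo
  have hr_cont : Continuous fun x : G ↦ r x := continuous_of_discreteTopology.comp continuous_mk
  exact (hr_cont.inv.mul continuous_id).subtype_mk _

theorem isClopenPiecewiseTranslation_extendPerm (hHo : IsOpen (H : Set G)) {σ : Equiv.Perm H}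
    (hσ : IsClopenPiecewiseTranslation (σ : H → H)) :
    IsClopenPiecewiseTranslation (extendPerm hr σ : G → G) := by
  obtain ⟨n, P, g, hP_clopen, hP_partition, hσ_transl⟩ := hσ
  refine ⟨n, fun i ↦ Prod.snd ∘ (prodEquivOfSection hr).symm ⁻¹' P i, fun i ↦ g i,
    fun i ↦ (hP_clopen i).preimage (continuous_snd_prodEquivOfSection_symm hr hHo),
    fun x ↦ hP_partition _, fun i x hx ↦ ?_⟩
  rw [extendPerm_apply, hσ_transl i ((prodEquivOfSection hr).symm x).2 hx, Subgroup.coe_mul,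
    coe_prodEquivOfSection_symm_snd, ← mul_assoc, mul_inv_cancel_left]

end QuotientGroup

theorem extend_clopen_TL_action_general {G : Type*} [Group G] [TopologicalSpace G]
    [IsTopologicalGroup G]
    [MeasurableSpace G] [BorelSpace G]
    (H : Subgroup G) (hHo : IsOpen (H : Set G))
    (φ : Equiv.Perm H)
    (hφ : ∃ (n : ℕ) (P : Fin n → Set H) (g : Fin n → H),
      (∀ i, IsClopen (P i)) ∧ (∀ x : H, ∃! i, x ∈ P i) ∧
      ∀ i, ∀ x ∈ P i, φ x = x * g i)
    (hfree : ∀ n : ℤ, n ≠ 0 → ∀ x : H, (φ ^ n) x ≠ x)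
    (D : Set H) (hD : MeasurableSet D)
    (hfund : ∀ x : H, ∃! n : ℤ, x ∈ ⇑(φ ^ n) '' D)
    (r : G ⧸ H → G) (hr : ∀ q : G ⧸ H, ((r q : G) : G ⧸ H) = q) :
    ∃ ψ : Equiv.Perm G,
      (∀ (x : G) (hx : (r ((x : G) : G ⧸ H))⁻¹ * x ∈ H),
        ψ x = r ((x : G) : G ⧸ H) * (φ ⟨(r ((x : G) : G ⧸ H))⁻¹ * x, hx⟩ : G)) ∧
      IsClopenPiecewiseTranslation (ψ : G → G) ∧
      (∀ n : ℤ, n ≠ 0 → ∀ x : G, (ψ ^ n) x ≠ x) ∧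
      ∃ E : Set G, MeasurableSet E ∧ ∀ x : G, ∃! n : ℤ, x ∈ ⇑(ψ ^ n) '' E := by
  open QuotientGroup in
  refine ⟨extendPerm hr φ, fun _ _ ↦ rfl, isClopenPiecewiseTranslation_extendPerm hr hHo hφ,
    fun n hn x ↦ ?_, Prod.snd ∘ (prodEquivOfSection hr).symm ⁻¹' D,
    (continuous_snd_prodEquivOfSection_symm hr hHo).measurable hD, fun x ↦ ?_⟩
  · rw [← map_zpow, Ne, QuotientGroup.extendPerm_apply_eq_self_iff]
    exact hfree n hn _
  · simpa only [← map_zpow, QuotientGroup.extendPerm_image_preimage, Set.mem_preimage,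
      Function.comp_apply] using hfund ((QuotientGroup.prodEquivOfSection hr).symm x).2

/-- A clopen translation-like action of ℤ on an open subgroup `H` extends, via a
section `r : G/H → G`, to a clopen translation-like action of ℤ on `G`. -/
theorem extend_clopen_TL_action {G : Type*} [Group G] [TopologicalSpace G]
    [IsTopologicalGroup G] [LocallyCompactSpace G] [T2Space G]
    [MeasurableSpace G] [BorelSpace G]
    (H : Subgroup G) (hHo : IsOpen (H : Set G))
    (φ : Equiv.Perm H)
    (hφ : ∃ (n : ℕ) (P : Fin n → Set H) (g : Fin n → H),
      (∀ i, IsClopen (P i)) ∧ (∀ x : H, ∃! i, x ∈ P i) ∧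
      ∀ i, ∀ x ∈ P i, φ x = x * g i)
    (hfree : ∀ n : ℤ, n ≠ 0 → ∀ x : H, (φ ^ n) x ≠ x)
    (D : Set H) (hD : MeasurableSet D)
    (hfund : ∀ x : H, ∃! n : ℤ, x ∈ ⇑(φ ^ n) '' D)
    (r : G ⧸ H → G) (hr : ∀ q : G ⧸ H, ((r q : G) : G ⧸ H) = q) :
    ∃ ψ : Equiv.Perm G,
      (∀ (x : G) (hx : (r ((x : G) : G ⧸ H))⁻¹ * x ∈ H),
        ψ x = r ((x : G) : G ⧸ H) * (φ ⟨(r ((x : G) : G ⧸ H))⁻¹ * x, hx⟩ : G)) ∧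
      IsClopenPiecewiseTranslation (ψ : G → G) ∧
      (∀ n : ℤ, n ≠ 0 → ∀ x : G, (ψ ^ n) x ≠ x) ∧
      ∃ E : Set G, MeasurableSet E ∧ ∀ x : G, ∃! n : ℤ, x ∈ ⇑(ψ ^ n) '' E :=
  extend_clopen_TL_action_general H hHo φ hφ hfree D hD hfund r hr
end

section
/- Let G be a locally compact group that is locally elliptic (every compact subset of G is contained in a compact subgroup). Then G admits no Borel piecewise-translation generating a free ℤ-action with a measurable fundamental domain. Concretely: if φ is such a Borel piecewise-translation with translation parts in a finite set F, then any compact subgroup H containing F is φ-invariant, and φ restricted to H would give such an action on the compact group H, a contradiction. -/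
/-!
A piecewise translation with translations in a subgroup `K` maps `K` onto itself, and a bijective
Borel piecewise translation preserves every right-invariant measure, since it moves finitely many
measurable pieces by right translations. Taking `K` compact and containing the translations, the
restriction to `K` preserves Haar measure on `K`, which is right-invariant by compactness. The
translates of a fundamental domain then partition `K` into countably many sets of equal measure,
which cannot add up to the finite, nonzero total mass of `K`.
-/

def IsBorelPiecewiseTranslation {G : Type*} [Group G] [MeasurableSpace G]
    (α : G → G) : Prop :=
  ∃ (n : ℕ) (P : Fin n → Set G) (g : Fin n → G),
    (∀ i, MeasurableSet (P i)) ∧ (∀ x : G, ∃! i, x ∈ P i) ∧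
    ∀ i, ∀ x ∈ P i, α x = x * g i

open MeasureTheory Set Function

lemma pairwise_disjoint_of_existsUnique_mem {X ι : Type*} {P : ι → Set X}
    (hP : ∀ x, ∃! i, x ∈ P i) : Pairwise (Disjoint on P) := fun _ _ hij =>
  disjoint_left.mpr fun x hi hj => hij ((hP x).unique hi hj)

lemma iUnion_eq_univ_of_existsUnique_mem {X ι : Type*} {P : ι → Set X}
    (hP : ∀ x, ∃! i, x ∈ P i) : ⋃ i, P i = univ :=
  eq_univ_of_forall fun x => mem_iUnion.mpr (hP x).exists

lemma MeasureTheory.Measure.isMulRightInvariant_of_compactSpace {H : Type*} [Group H]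
    [TopologicalSpace H] [IsTopologicalGroup H] [CompactSpace H] [MeasurableSpace H]
    [BorelSpace H] (μ : Measure H) [μ.IsHaarMeasure] : μ.IsMulRightInvariant := by
  refine ⟨fun g => ?_⟩
  set c := (μ.map (· * g)).haarScalarFactor μ
  have hmap : μ.map (· * g) = c • μ := Measure.isMulInvariant_eq_smul_of_compactSpace _ _
  have huniv : μ univ = c * μ univ := by
    simpa [Measure.map_apply (measurable_mul_const g) MeasurableSet.univ] using
      congrArg (· univ) hmap
  have hc : (c : ENNReal) = 1 :=
    (ENNReal.mul_left_inj (NeZero.ne (μ univ)) (measure_ne_top μ univ)).mp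
      (by rw [one_mul]; exact huniv.symm)
  rw [hmap, ENNReal.coe_eq_one.mp hc, one_smul]

namespace Equiv.Perm

lemma image_subtypePerm_preimage_val {X : Type*} {p : X → Prop} (f : Perm X)
    (h : ∀ x, p (f x) ↔ p x) (D : Set X) :
    f.subtypePerm h '' (Subtype.val ⁻¹' D) = Subtype.val ⁻¹' (f '' D) := by
  ext y
  constructor
  · rintro ⟨x, hx, rfl⟩
    exact ⟨x, hx, rfl⟩
  · rintro ⟨x, hx, hxy⟩
    exact ⟨⟨x, (h x).mp (hxy ▸ y.2)⟩, hx, Subtype.ext hxy⟩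

variable {X : Type*} [MeasurableSpace X] {μ : Measure X}

lemma measurePreserving_zpow {φ : Perm X} (hφ : MeasurePreserving φ μ μ)
    (hφ' : MeasurePreserving ⇑φ⁻¹ μ μ) (n : ℤ) : MeasurePreserving ⇑(φ ^ n) μ μ := by
  induction n using Int.induction_on with
  | zero => exact MeasurePreserving.id μ
  | succ n ih => rw [zpow_add_one, coe_mul]; exact ih.comp hφ
  | pred n ih => rw [zpow_sub_one, coe_mul]; exact ih.comp hφ'

lemma measure_univ_eq_tsum_of_existsUnique_mem_zpow_image {φ : Perm X}
    (hφ : ∀ n : ℤ, MeasurePreserving ⇑(φ ^ n) μ μ) {D : Set X} (hD : MeasurableSet D)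
    (hfund : ∀ x, ∃! n : ℤ, x ∈ ⇑(φ ^ n) '' D) : μ univ = ∑' _ : ℤ, μ D := by
  have himage : ∀ n : ℤ, ⇑(φ ^ n) '' D = ⇑(φ ^ (-n)) ⁻¹' D := fun n => by
    rw [Equiv.image_eq_preimage_symm, zpow_neg]; rfl
  have hmeas : ∀ n : ℤ, MeasurableSet (⇑(φ ^ n) '' D) := fun n => by
    rw [himage]; exact (hφ (-n)).measurable hD
  rw [← iUnion_eq_univ_of_existsUnique_mem hfund,
    measure_iUnion (pairwise_disjoint_of_existsUnique_mem hfund) hmeas]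
  refine tsum_congr fun n => ?_
  rw [himage]
  exact (hφ (-n)).measure_preimage hD.nullMeasurableSet

end Equiv.Perm

namespace IsBorelPiecewiseTranslation

variable {G : Type*} [Group G] [MeasurableSpace G] {α : G → G}

lemma exists_finite_translations (h : IsBorelPiecewiseTranslation α) :
    ∃ F : Set G, F.Finite ∧ ∀ x, x⁻¹ * α x ∈ F := by
  obtain ⟨n, P, g, -, hP, hα⟩ := h
  refine ⟨range g, finite_range g, fun x => ?_⟩
  obtain ⟨i, hi, -⟩ := hP x
  rw [hα i x hi, inv_mul_cancel_left]
  exact mem_range_self i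

lemma subtypePerm {φ : Equiv.Perm G} (h : IsBorelPiecewiseTranslation φ) {K : Subgroup G}
    (hK : ∀ x, φ x ∈ K ↔ x ∈ K) :
    IsBorelPiecewiseTranslation ⇑(φ.subtypePerm hK : Equiv.Perm K) := by
  classical
  obtain ⟨n, P, g, hPm, hP, hφ⟩ := h
  -- a piece meeting `K` has its translation in `K`; the value `1` is only chosen for the others
  refine ⟨n, fun i => Subtype.val ⁻¹' P i, fun i => if hg : g i ∈ K then ⟨g i, hg⟩ else 1,
    fun i => measurable_subtype_coe (hPm i), fun k => hP k, fun i k hk => ?_⟩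
  have hg : g i ∈ K := by
    simpa only [hφ i k hk, inv_mul_cancel_left] using K.mul_mem (K.inv_mem k.2) ((hK k).mpr k.2)
  ext
  simp [hg, hφ i k hk]

variable [MeasurableMul G]

lemma measurable (h : IsBorelPiecewiseTranslation α) : Measurable α := by
  obtain ⟨n, P, g, hPm, hP, hα⟩ := h
  intro A hA
  have hpre : α ⁻¹' A = ⋃ i, P i ∩ (· * g i) ⁻¹' A := by
    ext x
    obtain ⟨i, hi, -⟩ := hP x
    simp only [mem_preimage, mem_iUnion, mem_inter_iff]
    refine ⟨fun hx => ⟨i, hi, hα i x hi ▸ hx⟩, ?_⟩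
    rintro ⟨j, hj, hx⟩
    rwa [hα j x hj]
  rw [hpre]
  exact MeasurableSet.iUnion fun i => (hPm i).inter (measurable_mul_const (g i) hA)

lemma measure_image (h : IsBorelPiecewiseTranslation α)
    (hinj : Injective α) (μ : Measure G) [μ.IsMulRightInvariant] {s : Set G}
    (hs : MeasurableSet s) : μ (α '' s) = μ s := by
  obtain ⟨n, P, g, hPm, hP, hα⟩ := h
  have hpieces : α '' s = ⋃ i, (· * g i) '' (s ∩ P i) := by
    conv_lhs => rw [← inter_univ s, ← iUnion_eq_univ_of_existsUnique_mem hP, inter_iUnion,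
      image_iUnion]
    exact iUnion_congr fun i => image_congr fun x hx => hα i x hx.2
  have hmeas : ∀ i, MeasurableSet (s ∩ P i) := fun i => hs.inter (hPm i)
  have hdisj : Pairwise (Disjoint on fun i => s ∩ P i) := fun i j hij =>
    ((pairwise_disjoint_of_existsUnique_mem hP hij).mono inter_subset_right inter_subset_right)
  have himage_eq : ∀ i, (· * g i) '' (s ∩ P i) = α '' (s ∩ P i) := fun i =>
    image_congr fun x hx => (hα i x hx.2).symm
  calc μ (α '' s) = ∑' i, μ ((· * g i) '' (s ∩ P i)) := by
        rw [hpieces, measure_iUnion]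
        · intro i j hij
          simp only [onFun, himage_eq]
          exact disjoint_image_of_injective hinj (hdisj hij)
        · intro i
          rw [image_mul_right]
          exact measurable_mul_const _ (hmeas i)
    _ = ∑' i, μ (s ∩ P i) := by
        simp only [image_mul_right, measure_preimage_mul_right]
    _ = μ s := by
        rw [← measure_iUnion hdisj hmeas, ← inter_iUnion, iUnion_eq_univ_of_existsUnique_mem hP,
          inter_univ]

lemma perm_inv {φ : Equiv.Perm G} (h : IsBorelPiecewiseTranslation φ) :
    IsBorelPiecewiseTranslation ⇑φ⁻¹ := by
  obtain ⟨n, P, g, hPm, hP, hφ⟩ := h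
  have hinv : ∀ i y, φ⁻¹ y ∈ P i → φ⁻¹ y = y * (g i)⁻¹ := fun i y hy => by
    rw [eq_mul_inv_iff_mul_eq, ← hφ i _ hy]
    exact Equiv.Perm.eq_inv_iff_eq.mp rfl
  have hmem : ∀ i y, φ⁻¹ y ∈ P i ↔ y * (g i)⁻¹ ∈ P i := fun i y => by
    refine ⟨fun hy => hinv i y hy ▸ hy, fun hy => ?_⟩
    rwa [Equiv.Perm.inv_eq_iff_eq.mpr (by rw [hφ i _ hy, inv_mul_cancel_right])]
  refine ⟨n, fun i => (· * (g i)⁻¹) ⁻¹' P i, fun i => (g i)⁻¹,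
    fun i => measurable_mul_const _ (hPm i), fun y => ?_, fun i y hy => hinv i y ((hmem i y).mpr hy)⟩
  simpa only [mem_preimage, ← hmem] using hP (φ⁻¹ y)

lemma measurePreserving {φ : Equiv.Perm G} (h : IsBorelPiecewiseTranslation φ)
    (μ : Measure G) [μ.IsMulRightInvariant] : MeasurePreserving φ μ μ := by
  refine ⟨h.measurable, Measure.ext fun s hs => ?_⟩
  have hpre : ⇑φ ⁻¹' s = ⇑φ⁻¹ '' s := ((φ⁻¹).image_eq_preimage_symm s).symm
  rw [Measure.map_apply h.measurable hs, hpre]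
  exact h.perm_inv.measure_image (φ⁻¹).injective μ hs

lemma not_existsUnique_mem_zpow_image_of_compactSpace
    {H : Type*} [Group H] [TopologicalSpace H] [IsTopologicalGroup H] [CompactSpace H]
    [MeasurableSpace H] [BorelSpace H] {ψ : Equiv.Perm H} (hψ : IsBorelPiecewiseTranslation ψ)
    {D : Set H} (hD : MeasurableSet D) : ¬ ∀ x, ∃! n : ℤ, x ∈ ⇑(ψ ^ n) '' D := by
  intro hfund
  let μ : Measure H := Measure.haar
  have := μ.isMulRightInvariant_of_compactSpace
  have hμ : μ univ = ∑' _ : ℤ, μ D :=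
    Equiv.Perm.measure_univ_eq_tsum_of_existsUnique_mem_zpow_image
      (Equiv.Perm.measurePreserving_zpow (hψ.measurePreserving μ)
        (hψ.perm_inv.measurePreserving μ)) hD hfund
  rcases eq_or_ne (μ D) 0 with hD0 | hD0
  · exact NeZero.ne (μ univ) (by rwa [hD0, tsum_zero] at hμ)
  · exact measure_ne_top μ univ (hμ.trans (ENNReal.tsum_const_eq_top_of_ne_zero hD0))

end IsBorelPiecewiseTranslation

theorem no_TL_action_of_locallyElliptic_general {G : Type*} [Group G] [TopologicalSpace G]
    [IsTopologicalGroup G]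
    [MeasurableSpace G] [BorelSpace G]
    (hell : ∀ C : Set G, IsCompact C →
      ∃ K : Subgroup G, IsCompact (K : Set G) ∧ C ⊆ (K : Set G)) :
    ¬ ∃ φ : Equiv.Perm G, IsBorelPiecewiseTranslation (φ : G → G) ∧
        (∀ n : ℤ, n ≠ 0 → ∀ x : G, (φ ^ n) x ≠ x) ∧
        ∃ D : Set G, MeasurableSet D ∧ ∀ x : G, ∃! n : ℤ, x ∈ ⇑(φ ^ n) '' D := by
  rintro ⟨φ, hφ, -, D, hD, hfund⟩
  obtain ⟨F, hF, hφF⟩ := hφ.exists_finite_translations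
  obtain ⟨K, hKc, hFK⟩ := hell F hF.isCompact
  have hK : ∀ x, φ x ∈ K ↔ x ∈ K := fun x => by
    simpa only [mul_inv_cancel_left] using K.mul_mem_cancel_right (y := x) (hFK (hφF x))
  have : CompactSpace K := isCompact_iff_compactSpace.mp hKc
  refine (hφ.subtypePerm hK).not_existsUnique_mem_zpow_image_of_compactSpace
    (measurable_subtype_coe hD) fun k => ?_
  simpa only [Equiv.Perm.subtypePerm_zpow, Equiv.Perm.image_subtypePerm_preimage_val,
    mem_preimage] using hfund k

/-- A locally elliptic locally compact group admits no Borel piecewise-translation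
generating a free ℤ-action with a Borel fundamental domain. -/
theorem no_TL_action_of_locallyElliptic {G : Type*} [Group G] [TopologicalSpace G]
    [IsTopologicalGroup G] [LocallyCompactSpace G] [T2Space G]
    [MeasurableSpace G] [BorelSpace G]
    (hell : ∀ C : Set G, IsCompact C →
      ∃ K : Subgroup G, IsCompact (K : Set G) ∧ C ⊆ (K : Set G)) :
    ¬ ∃ φ : Equiv.Perm G, IsBorelPiecewiseTranslation (φ : G → G) ∧
        (∀ n : ℤ, n ≠ 0 → ∀ x : G, (φ ^ n) x ≠ x) ∧
        ∃ D : Set G, MeasurableSet D ∧ ∀ x : G, ∃! n : ℤ, x ∈ ⇑(φ ^ n) '' D :=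
  no_TL_action_of_locallyElliptic_general hell
end
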